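/- For every n ≥ 1, the polynomial identity P^D̃_n(t) = (2nt − t + 1)·P^D̃_{n−1}(t) + 2t(1−t)·(d/dt)P^D̃_{n−1}(t) + t(1−t)^{n−1} holds. -/

import Mathlib

open MeasureTheory Finset

/-- Number of descents of a finite sequence given as a list. -/
def descCount {α : Type*} [LT α] [DecidableRel ((· < ·) : α → α → Prop)] : List α → ℕ
  | a :: b :: rest => (if b < a then 1 else 0) + descCount (b :: rest)
  | _ => 0

/-- Type A Eulerian number: permutations of {1,…,n} with k descents. -/
def eulerianA (n k : ℕ) : ℕ :=
  Fintype.card {σ : Equiv.Perm (Fin n) // descCount (List.ofFn fun i => σ i) = k}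

/-- Eulerian polynomial of type A. -/
noncomputable def polyA (n : ℕ) (t : ℝ) : ℝ :=
  ∑ k ∈ Finset.range (n + 1), (eulerianA n k : ℝ) * t ^ k

/-- The underlying set {-n, …, -1, 0, 1, …, n}. -/
abbrev BSet (n : ℕ) : Type := {x : ℤ // x ∈ Finset.Icc (-(n : ℤ)) (n : ℤ)}

def negB {n : ℕ} (x : BSet n) : BSet n :=
  ⟨-x.1, by have := x.2; simp only [Finset.mem_Icc] at *; omega⟩

def posB {n : ℕ} (i : Fin n) : BSet n :=
  ⟨((i : ℕ) : ℤ) + 1, by have := i.isLt; simp only [Finset.mem_Icc]; omega⟩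

/-- A permutation of {-n,…,n} is a signed permutation if σ(-k) = -σ(k). -/
def IsSigned {n : ℕ} (σ : Equiv.Perm (BSet n)) : Prop :=
  ∀ x : BSet n, (σ (negB x)).1 = -((σ x).1)

noncomputable instance {n : ℕ} (σ : Equiv.Perm (BSet n)) : Decidable (IsSigned σ) :=
  inferInstanceAs (Decidable (∀ x : BSet n, (σ (negB x)).1 = -((σ x).1)))

/-- Number of descents of the sequence (0, σ(1), …, σ(n)). -/
def descB {n : ℕ} (σ : Equiv.Perm (BSet n)) : ℕ :=
  descCount ((0 : ℤ) :: List.ofFn fun i : Fin n => (σ (posB i)).1)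

/-- Number of negative terms among σ(1), …, σ(n). -/
def negCount {n : ℕ} (σ : Equiv.Perm (BSet n)) : ℕ :=
  (Finset.univ.filter fun i : Fin n => (σ (posB i)).1 < 0).card

/-- Type B Eulerian number. -/
noncomputable def eulerianB (n k : ℕ) : ℕ :=
  Fintype.card {σ : Equiv.Perm (BSet n) // IsSigned σ ∧ descB σ = k}

/-- Primary type D Eulerian number. -/
noncomputable def eulerianD (n k : ℕ) : ℕ :=
  Fintype.card {σ : Equiv.Perm (BSet n) //
    (IsSigned σ ∧ Even (negCount σ)) ∧ descB σ = k}

/-- Complementary type D Eulerian number. -/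
noncomputable def eulerianDt (n k : ℕ) : ℕ :=
  Fintype.card {σ : Equiv.Perm (BSet n) //
    (IsSigned σ ∧ ¬ Even (negCount σ)) ∧ descB σ = k}

noncomputable def polyB (n : ℕ) (t : ℝ) : ℝ :=
  ∑ k ∈ Finset.range (n + 1), (eulerianB n k : ℝ) * t ^ k

noncomputable def polyD (n : ℕ) (t : ℝ) : ℝ :=
  ∑ k ∈ Finset.range (n + 1), (eulerianD n k : ℝ) * t ^ k

noncomputable def polyDt (n : ℕ) (t : ℝ) : ℝ :=
  ∑ k ∈ Finset.range (n + 1), (eulerianDt n k : ℝ) * t ^ k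

noncomputable def polyDtP (n : ℕ) : Polynomial ℝ :=
  ∑ k ∈ Finset.range (n + 1), Polynomial.C (eulerianDt n k : ℝ) * Polynomial.X ^ k

/-!
A signed permutation is determined by its word `(σ(1), …, σ(n))`, and every word of length
`n + 1` arises exactly once by inserting `n + 1` or `-(n + 1)` into one of the `n + 1` slots after
the `0` of `(0, w₁, …, wₙ)`. Inserting `n + 1` raises the descent count exactly at the ascent
slots; inserting `-(n + 1)` raises it at the ascent slots and at the end. Writing `E n`, `O n` for
the descent polynomials of the words with an even / odd number of negative letters, this gives
`O (n+1) = A O n + B E n` and `E (n+1) = A E n + B O n` with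
`A P = (1 + n t) P + t (1 - t) P'` and `B P = (n + 1) t P + t (1 - t) P'`. Subtracting,
`E n - O n = (1 - t) ^ n`, and substituting `E n = O n + (1 - t) ^ n` into the first recurrence
gives the claim.
-/

open Polynomial

theorem Finset.sum_card_fiber_mul_pow {ι R : Type*} [CommSemiring R] (s : Finset ι)
    (f : ι → ℕ) {n : ℕ} (hf : ∀ i ∈ s, f i ≤ n) (x : R) :
    ∑ k ∈ range (n + 1), ((s.filter fun i => f i = k).card : R) * x ^ k
      = ∑ i ∈ s, x ^ f i := by
  rw [← sum_fiberwise_of_maps_to (g := f) (t := range (n + 1))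
    fun i hi => mem_range.2 (Nat.lt_succ_of_le (hf i hi))]
  refine sum_congr rfl fun k _ => ?_
  rw [sum_congr rfl fun i hi => by rw [(mem_filter.1 hi).2], sum_const,
    nsmul_eq_mul]

theorem Polynomial.X_mul_derivative_X_pow {R : Type*} [CommSemiring R] (d : ℕ) :
    X * derivative (X ^ d : R[X]) = (d : R[X]) * X ^ d := by
  cases d with
  | zero => simp
  | succ d => rw [derivative_X_pow, C_eq_natCast, Nat.add_sub_cancel]; push_cast; ring

theorem Polynomial.one_sub_X_mul_derivative_one_sub_X_pow {R : Type*} [CommRing R] (m : ℕ) :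
    (1 - X) * derivative ((1 - X) ^ m : R[X]) = -((m : R[X]) * (1 - X) ^ m) := by
  cases m with
  | zero => simp
  | succ m =>
    simp only [derivative_pow, derivative_sub, derivative_one, derivative_X, C_eq_natCast,
      Nat.add_sub_cancel]
    ring

theorem List.ofFn_insertNth {α : Type*} {n : ℕ} (p : Fin (n + 1)) (x : α) (f : Fin n → α) :
    List.ofFn (Fin.insertNth p x f) = (List.ofFn f).insertIdx p x := by
  induction n with
  | zero => rw [Fin.fin_one_eq_zero p]; simp [Fin.insertNth_zero']
  | succ m ih =>
    cases p using Fin.cases with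
    | zero => simp [Fin.insertNth_zero']
    | succ q =>
      rw [← Fin.cons_self_tail f, Fin.insertNth_succ_cons, List.ofFn_cons, List.ofFn_cons, ih]
      simp

theorem descCount_cons_le {α : Type*} [LT α] [DecidableRel ((· < ·) : α → α → Prop)] :
    ∀ (a : α) (l : List α), descCount (a :: l) ≤ l.length
  | _, [] => le_rfl
  | a, b :: t => by
    have := descCount_cons_le b t
    rw [descCount]
    split <;> simp <;> omega

/-- Inserting an extreme value `v` into a slot after the head keeps the descent count at a
descent and raises it by one at an ascent; at the end it adds a descent iff `v` is the minimum. -/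
theorem sum_pow_descCount_insertIdx {α R : Type*} [LinearOrder α] [CommRing R] (x : R) :
    ∀ (a v : α) (l : List α), ((∀ y ∈ a :: l, y < v) ∨ (∀ y ∈ a :: l, v < y)) →
    ∑ g ∈ range (l.length + 1), x ^ descCount (a :: l.insertIdx g v)
      = (descCount (a :: l) + if v < a then 0 else 1) * x ^ descCount (a :: l)
        + (l.length + (if v < a then 1 else 0) - descCount (a :: l)) * x ^ (descCount (a :: l) + 1)
  | a, v, [], hv => by
    rcases hv with hv | hv
    · have := hv a (by simp)
      simp [descCount, this.not_gt]
    · have := hv a (by simp)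
      simp [descCount, this]
  | a, v, b :: t, hv => by
    have hvb : (v < b ↔ v < a) := by
      rcases hv with hv | hv
      · simp [(hv a (by simp)).le.not_gt, (hv b (by simp)).le.not_gt]
      · simp [hv a (by simp), hv b (by simp)]
    have hslot : descCount (a :: v :: b :: t) = descCount (b :: t) + 1 := by
      rcases hv with hv | hv
      · simp [descCount, (hv a (by simp)).le.not_gt, hv b (by simp)]; omega
      · simp [descCount, hv a (by simp), (hv b (by simp)).le.not_gt]; omega
    have ih := sum_pow_descCount_insertIdx x b v t
      (hv.imp (fun h y hy => h y (List.mem_cons_of_mem a hy))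
        (fun h y hy => h y (List.mem_cons_of_mem a hy)))
    rw [sum_range_succ', List.insertIdx_zero, hslot]
    simp only [List.insertIdx_succ_cons, descCount, pow_add, ← mul_sum, ih, hvb,
      List.length_cons]
    split_ifs <;> push_cast <;> ring

/-- Words `(σ(1), …, σ(n))` of signed permutations. -/
def IsSignedWord (n : ℕ) (w : Fin n → ℤ) : Prop :=
  (∀ i, 1 ≤ (w i).natAbs ∧ (w i).natAbs ≤ n) ∧ Function.Injective fun i => (w i).natAbs

instance (n : ℕ) : DecidablePred (IsSignedWord n) := fun _ => by
  unfold IsSignedWord; infer_instance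

noncomputable def signedWords (n : ℕ) : Finset (Fin n → ℤ) :=
  (Fintype.piFinset fun _ : Fin n => Icc (-(n : ℤ)) n).filter (IsSignedWord n)

theorem mem_signedWords {n : ℕ} {w : Fin n → ℤ} : w ∈ signedWords n ↔ IsSignedWord n w := by
  refine ⟨fun h => (mem_filter.1 h).2, fun h => mem_filter.2 ⟨?_, h⟩⟩
  refine Fintype.mem_piFinset.2 fun i => mem_Icc.2 ?_
  have := h.1 i
  omega

def wordOf {n : ℕ} (σ : Equiv.Perm (BSet n)) : Fin n → ℤ := fun i => (σ (posB i)).1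

def descW {n : ℕ} (w : Fin n → ℤ) : ℕ := descCount ((0 : ℤ) :: List.ofFn w)

theorem descW_le {n : ℕ} (w : Fin n → ℤ) : descW w ≤ n := by
  simpa [descW] using descCount_cons_le (0 : ℤ) (List.ofFn w)

def negW {n : ℕ} (w : Fin n → ℤ) : ℕ := (univ.filter fun i => w i < 0).card

theorem descW_wordOf {n : ℕ} (σ : Equiv.Perm (BSet n)) : descW (wordOf σ) = descB σ := rfl

theorem negW_wordOf {n : ℕ} (σ : Equiv.Perm (BSet n)) : negW (wordOf σ) = negCount σ := rfl

namespace BSet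

variable {n : ℕ}

def zero : BSet n := ⟨0, by simp⟩

theorem eq_zero_or_posB_or_negB (x : BSet n) :
    x = zero ∨ ∃ i, x = posB i ∨ x = negB (posB i) := by
  obtain ⟨x, hx⟩ := x
  rw [mem_Icc] at hx
  rcases lt_trichotomy x 0 with h | rfl | h
  · exact Or.inr ⟨⟨x.natAbs - 1, by omega⟩, Or.inr (Subtype.ext (by simp [posB, negB]; omega))⟩
  · exact Or.inl rfl
  · exact Or.inr ⟨⟨x.natAbs - 1, by omega⟩, Or.inl (Subtype.ext (by simp [posB]; omega))⟩

end BSet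

section SignedPerm

variable {n : ℕ} {σ τ : Equiv.Perm (BSet n)}

theorem IsSigned.apply_zero (hσ : IsSigned σ) : (σ BSet.zero).1 = 0 := by
  have h := hσ BSet.zero
  have : negB (BSet.zero : BSet n) = BSet.zero := Subtype.ext (by simp [negB, BSet.zero])
  rw [this] at h
  omega

theorem IsSigned.isSignedWord (hσ : IsSigned σ) : IsSignedWord n (wordOf σ) := by
  refine ⟨fun i => ?_, fun i j hij => ?_⟩
  · have hmem := mem_Icc.1 (σ (posB i)).2
    have hne : (σ (posB i)).1 ≠ 0 := fun h0 => by
      have := congrArg Subtype.val (σ.injective (Subtype.ext (h0.trans hσ.apply_zero.symm)))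
      simp [posB, BSet.zero] at this
      omega
    simp only [wordOf]
    omega
  · simp only [wordOf] at hij
    rcases Int.natAbs_eq_natAbs_iff.1 hij with h | h
    · have := congrArg Subtype.val (σ.injective (Subtype.ext h))
      simp only [posB, add_left_inj, Nat.cast_inj] at this
      exact Fin.ext this
    · rw [← hσ (posB j)] at h
      have := congrArg Subtype.val (σ.injective (Subtype.ext h))
      simp only [posB, negB] at this
      omega

theorem IsSigned.ext (hσ : IsSigned σ) (hτ : IsSigned τ) (h : wordOf σ = wordOf τ) :
    σ = τ := by
  ext x
  rcases x.eq_zero_or_posB_or_negB with rfl | ⟨i, rfl | rfl⟩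
  · rw [hσ.apply_zero, hτ.apply_zero]
  · exact congrFun h i
  · rw [hσ, hτ]
    exact congrArg Neg.neg (congrFun h i)

end SignedPerm

section OfWord

variable {n : ℕ} {w : Fin n → ℤ}

/-- `x ↦ sign(x) · w(|x|)`, the signed permutation with word `w`. -/
def ofWordFun (w : Fin n → ℤ) (hw : IsSignedWord n w) (x : BSet n) : BSet n :=
  if hx : x.1 = 0 then BSet.zero
  else
    have hi : x.1.natAbs - 1 < n := by have := mem_Icc.1 x.2; omega
    ⟨if 0 < x.1 then w ⟨_, hi⟩ else -w ⟨_, hi⟩, by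
      have := hw.1 ⟨_, hi⟩
      rw [mem_Icc]
      split_ifs <;> omega⟩

theorem ofWordFun_injective (hw : IsSignedWord n w) : Function.Injective (ofWordFun w hw) := by
  intro x y hxy
  have hxy' := congrArg Subtype.val hxy
  have hx2 := mem_Icc.1 x.2
  have hy2 := mem_Icc.1 y.2
  apply Subtype.ext
  unfold ofWordFun at hxy'
  by_cases hx : x.1 = 0 <;> by_cases hy : y.1 = 0
  · rw [hx, hy]
  · have := hw.1 ⟨y.1.natAbs - 1, by omega⟩
    simp only [dif_pos hx, dif_neg hy, BSet.zero] at hxy'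
    split_ifs at hxy' <;> omega
  · have := hw.1 ⟨x.1.natAbs - 1, by omega⟩
    simp only [dif_pos hy, dif_neg hx, BSet.zero] at hxy'
    split_ifs at hxy' <;> omega
  · simp only [dif_neg hx, dif_neg hy] at hxy'
    have hbx := hw.1 ⟨x.1.natAbs - 1, by omega⟩
    have habs :
        (w ⟨x.1.natAbs - 1, by omega⟩).natAbs = (w ⟨y.1.natAbs - 1, by omega⟩).natAbs := by
      split_ifs at hxy' <;> omega
    have hidx : x.1.natAbs - 1 = y.1.natAbs - 1 := congrArg Fin.val (hw.2 habs)
    have hww : w ⟨x.1.natAbs - 1, by omega⟩ = w ⟨y.1.natAbs - 1, by omega⟩ :=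
      congrArg w (Fin.ext hidx)
    split_ifs at hxy' <;> omega

noncomputable def ofWord (w : Fin n → ℤ) (hw : IsSignedWord n w) : Equiv.Perm (BSet n) :=
  Equiv.ofBijective _ (Finite.injective_iff_bijective.1 (ofWordFun_injective hw))

theorem isSigned_ofWord (hw : IsSignedWord n w) : IsSigned (ofWord w hw) := by
  intro x
  have hx2 := mem_Icc.1 x.2
  simp only [ofWord, Equiv.ofBijective_apply, ofWordFun, negB, BSet.zero]
  by_cases hx : x.1 = 0
  · simp [hx]
  · have hi : (-x.1).natAbs - 1 = x.1.natAbs - 1 := by omega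
    simp only [dif_neg hx, dif_neg (neg_ne_zero.2 hx), hi]
    split_ifs <;> omega

theorem wordOf_ofWord (hw : IsSignedWord n w) : wordOf (ofWord w hw) = w := by
  funext i
  have hi : ((i : ℕ) : ℤ) + 1 ≠ 0 := by omega
  simp only [wordOf, ofWord, Equiv.ofBijective_apply, ofWordFun, posB, dif_neg hi]
  simp only [show (0 : ℤ) < (i : ℕ) + 1 by omega, if_true]
  exact congrArg w (Fin.ext (by simp; omega))

end OfWord

theorem card_isSigned_and_wordOf {n : ℕ} (Q : (Fin n → ℤ) → Prop) [DecidablePred Q] :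
    Fintype.card {σ : Equiv.Perm (BSet n) // IsSigned σ ∧ Q (wordOf σ)}
      = ((signedWords n).filter Q).card := by
  rw [Fintype.card_subtype]
  refine card_bij (fun σ _ => wordOf σ) (fun σ hσ => ?_) (fun σ hσ τ hτ h => ?_)
    (fun w hw => ?_)
  · simp only [mem_filter, mem_univ, true_and] at hσ ⊢
    exact ⟨mem_signedWords.2 hσ.1.isSignedWord, hσ.2⟩
  · simp only [mem_filter, mem_univ, true_and] at hσ hτ
    exact hσ.1.ext hτ.1 h
  · obtain ⟨hw, hQ⟩ := mem_filter.1 hw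
    have hw := mem_signedWords.1 hw
    refine ⟨ofWord w hw, ?_, wordOf_ofWord hw⟩
    simp only [mem_filter, mem_univ, true_and, wordOf_ofWord hw]
    exact ⟨isSigned_ofWord hw, hQ⟩

section Insertion

variable {m : ℕ} {w : Fin m → ℤ}

theorem IsSignedWord.natAbs_insertNth_eq_iff (hw : IsSignedWord m w)
    (g : Fin (m + 1)) {v : ℤ} (hv : v.natAbs = m + 1) (j : Fin (m + 1)) :
    (Fin.insertNth (α := fun _ => ℤ) g v w j).natAbs = m + 1 ↔ j = g := by
  rcases g.eq_self_or_eq_succAbove j with rfl | ⟨i, rfl⟩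
  · simpa using hv
  · have := hw.1 i
    simp only [Fin.insertNth_apply_succAbove, Fin.succAbove_ne, iff_false]
    omega

theorem IsSignedWord.insertNth (hw : IsSignedWord m w) (g : Fin (m + 1))
    {v : ℤ} (hv : v.natAbs = m + 1) : IsSignedWord (m + 1) (Fin.insertNth g v w) := by
  refine ⟨(Fin.forall_iff_succAbove g).2 ⟨by simp [hv], fun i => ?_⟩, fun i j hij => ?_⟩
  · have := hw.1 i
    simp only [Fin.insertNth_apply_succAbove]
    omega
  · rcases g.eq_self_or_eq_succAbove i with rfl | ⟨i, rfl⟩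
    · exact ((hw.natAbs_insertNth_eq_iff i hv j).1 (by simpa [hv] using hij.symm)).symm
    · rcases g.eq_self_or_eq_succAbove j with rfl | ⟨j, rfl⟩
      · exact (hw.natAbs_insertNth_eq_iff _ hv _).1 (by simpa [hv] using hij)
      · simp only [Fin.insertNth_apply_succAbove] at hij
        rw [hw.2 hij]

theorem IsSignedWord.removeNth {w : Fin (m + 1) → ℤ} (hw : IsSignedWord (m + 1) w)
    {p : Fin (m + 1)} (hp : (w p).natAbs = m + 1) : IsSignedWord m (Fin.removeNth p w) := by
  refine ⟨fun i => ?_, fun i j hij => Fin.succAbove_right_injective (hw.2 hij)⟩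
  have hne : (w (p.succAbove i)).natAbs ≠ (w p).natAbs :=
    fun h => Fin.succAbove_ne p i (hw.2 h)
  have := hw.1 (p.succAbove i)
  simp only [Fin.removeNth]
  omega

theorem IsSignedWord.exists_natAbs_eq {w : Fin (m + 1) → ℤ} (hw : IsSignedWord (m + 1) w) :
    ∃ p, (w p).natAbs = m + 1 := by
  obtain ⟨p, -, hp⟩ := surj_on_of_inj_on_of_card_le (s := univ)
    (t := Icc 1 (m + 1)) (fun i _ => (w i).natAbs)
    (fun i _ => mem_Icc.2 (hw.1 i)) (fun i j _ _ h => hw.2 h) (by simp)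
    (m + 1) (by simp)
  exact ⟨p, hp.symm⟩

theorem sum_signedWords_succ {M : Type*} [AddCommMonoid M] (F : (Fin (m + 1) → ℤ) → M) :
    ∑ w ∈ signedWords (m + 1), F w
      = ∑ w ∈ signedWords m, ∑ g : Fin (m + 1),
          (F (Fin.insertNth g ((m : ℤ) + 1) w) + F (Fin.insertNth g (-((m : ℤ) + 1)) w)) := by
  have hpair (g : Fin (m + 1)) (w : Fin m → ℤ) :
      F (Fin.insertNth g ((m : ℤ) + 1) w) + F (Fin.insertNth g (-((m : ℤ) + 1)) w)
        = ∑ v ∈ ({(m : ℤ) + 1, -((m : ℤ) + 1)} : Finset ℤ), F (Fin.insertNth g v w) :=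
    (sum_pair (f := fun v => F (Fin.insertNth g v w))
      (show (m : ℤ) + 1 ≠ -((m : ℤ) + 1) by omega)).symm
  simp only [hpair, ← sum_product']
  symm
  refine sum_bij (fun x _ => Fin.insertNth x.2.1 x.2.2 x.1) ?_ ?_ ?_ (fun _ _ => rfl)
  · rintro ⟨w, g, v⟩ hx
    simp only [mem_product, mem_insert, mem_singleton, mem_signedWords] at hx ⊢
    exact hx.1.insertNth g (by omega)
  · rintro ⟨w, g, v⟩ hx ⟨w', g', v'⟩ hx' h
    simp only [mem_product, mem_insert, mem_singleton, mem_signedWords] at hx hx'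
    dsimp only at h
    have hv : v.natAbs = m + 1 := by omega
    have hg : g' = g := by
      rw [← hx.1.natAbs_insertNth_eq_iff g hv, h, Fin.insertNth_apply_same]
      omega
    subst hg
    obtain ⟨rfl, rfl⟩ := Fin.insertNth_inj.1 h
    rfl
  · intro w hw
    have hw := mem_signedWords.1 hw
    obtain ⟨p, hp⟩ := hw.exists_natAbs_eq
    refine ⟨(Fin.removeNth p w, p, w p), ?_, Fin.insertNth_self_removeNth p w⟩
    simp only [mem_product, mem_insert, mem_singleton, mem_signedWords, mem_univ, true_and]
    exact ⟨hw.removeNth hp, by omega⟩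

theorem negW_insertNth (g : Fin (m + 1)) (v : ℤ) :
    negW (Fin.insertNth g v w) = negW w + if v < 0 then 1 else 0 := by
  simp only [negW, card_filter, Fin.sum_univ_succAbove _ g, Fin.insertNth_apply_same,
    Fin.insertNth_apply_succAbove]
  omega

theorem IsSignedWord.sum_pow_descW_insertNth (hw : IsSignedWord m w) {v : ℤ}
    (hv : v = m + 1 ∨ v = -(m + 1)) :
    ∑ g : Fin (m + 1), (X : ℝ[X]) ^ descW (Fin.insertNth g v w)
      = (descW w + if v < 0 then 0 else 1 : ℝ[X]) * X ^ descW w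
        + (m + (if v < 0 then 1 else 0) - descW w : ℝ[X]) * X ^ (descW w + 1) := by
  have hext :
      (∀ y ∈ (0 : ℤ) :: List.ofFn w, y < v) ∨ (∀ y ∈ (0 : ℤ) :: List.ofFn w, v < y) := by
    have hbound (y) (hy : y ∈ (0 : ℤ) :: List.ofFn w) : y.natAbs ≤ m := by
      rcases List.mem_cons.1 hy with rfl | hy
      · simp
      · obtain ⟨i, rfl⟩ := List.mem_ofFn.1 hy
        exact (hw.1 i).2
    rcases hv with rfl | rfl
    · exact Or.inl fun y hy => by have := hbound y hy; omega
    · exact Or.inr fun y hy => by have := hbound y hy; omega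
  have hsum := sum_pow_descCount_insertIdx (X : ℝ[X]) 0 v (List.ofFn w) hext
  rw [List.length_ofFn] at hsum
  simp only [descW, List.ofFn_insertNth]
  rw [Fin.sum_univ_eq_sum_range
    (fun g => (X : ℝ[X]) ^ descCount (0 :: (List.ofFn w).insertIdx g v)), hsum]

theorem IsSignedWord.sum_pow_descW_insertNth_max (hw : IsSignedWord m w) :
    ∑ g : Fin (m + 1), (X : ℝ[X]) ^ descW (Fin.insertNth g ((m : ℤ) + 1) w)
      = (1 + (m : ℝ[X]) * X) * X ^ descW w + X * (1 - X) * derivative (X ^ descW w) := by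
  have hv : ¬((m : ℤ) + 1 < 0) := by omega
  rw [hw.sum_pow_descW_insertNth (Or.inl rfl), if_neg hv, if_neg hv]
  linear_combination (X - 1) * X_mul_derivative_X_pow (R := ℝ) (descW w)

theorem IsSignedWord.sum_pow_descW_insertNth_min (hw : IsSignedWord m w) :
    ∑ g : Fin (m + 1), (X : ℝ[X]) ^ descW (Fin.insertNth g (-((m : ℤ) + 1)) w)
      = ((m : ℝ[X]) + 1) * X * X ^ descW w + X * (1 - X) * derivative (X ^ descW w) := by
  have hv : -((m : ℤ) + 1) < 0 := by omega
  rw [hw.sum_pow_descW_insertNth (Or.inr rfl), if_pos hv, if_pos hv]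
  linear_combination (X - 1) * X_mul_derivative_X_pow (R := ℝ) (descW w)

end Insertion

noncomputable def descPoly (n : ℕ) (p : ℕ → Prop) [DecidablePred p] : ℝ[X] :=
  ∑ w ∈ (signedWords n).filter (fun w => p (negW w)), X ^ descW w

theorem descPoly_congr {n : ℕ} {p q : ℕ → Prop} [DecidablePred p] [DecidablePred q]
    (h : ∀ k, p k ↔ q k) : descPoly n p = descPoly n q := by
  simp only [descPoly, h]

theorem polyDtP_eq_descPoly (n : ℕ) : polyDtP n = descPoly n (fun k => ¬Even k) := by
  have hcard (k : ℕ) : eulerianDt n k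
      = (((signedWords n).filter fun w => ¬Even (negW w)).filter fun w => descW w = k).card := by
    rw [filter_filter, ← card_isSigned_and_wordOf]
    exact Fintype.card_congr
      (Equiv.subtypeEquivRight fun σ => by rw [negW_wordOf, descW_wordOf, and_assoc])
  simp only [polyDtP, hcard, map_natCast]
  exact sum_card_fiber_mul_pow _ _ (fun w _ => descW_le w) X

theorem descPoly_zero (p : ℕ → Prop) [DecidablePred p] :
    descPoly 0 p = if p 0 then 1 else 0 := by
  have : signedWords 0 = {Fin.elim0} := eq_singleton_iff_unique_mem.2
    ⟨mem_signedWords.2 ⟨fun i => i.elim0, fun i => i.elim0⟩, fun _ _ => Subsingleton.elim _ _⟩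
  by_cases h : p 0 <;> simp [descPoly, this, negW, descW, descCount, h]

theorem descPoly_succ (m : ℕ) (p : ℕ → Prop) [DecidablePred p] :
    descPoly (m + 1) p
      = (1 + (m : ℝ[X]) * X) * descPoly m p + X * (1 - X) * derivative (descPoly m p)
        + ((m : ℝ[X]) + 1) * X * descPoly m (fun k => p (k + 1))
        + X * (1 - X) * derivative (descPoly m (fun k => p (k + 1))) := by
  have hmax : ¬((m : ℤ) + 1 < 0) := by omega
  have hmin : -((m : ℤ) + 1) < 0 := by omega
  have hword : ∀ w ∈ signedWords m,
      ∑ g : Fin (m + 1),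
        ((if p (negW (Fin.insertNth g ((m : ℤ) + 1) w))
          then (X : ℝ[X]) ^ descW (Fin.insertNth g ((m : ℤ) + 1) w) else 0)
        + (if p (negW (Fin.insertNth g (-((m : ℤ) + 1)) w))
          then (X : ℝ[X]) ^ descW (Fin.insertNth g (-((m : ℤ) + 1)) w) else 0))
      = (if p (negW w)
          then (1 + (m : ℝ[X]) * X) * X ^ descW w + X * (1 - X) * derivative (X ^ descW w)
          else 0)
        + (if p (negW w + 1)
          then ((m : ℝ[X]) + 1) * X * X ^ descW w + X * (1 - X) * derivative (X ^ descW w)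
          else 0) := by
    intro w hw
    have hw := mem_signedWords.1 hw
    simp only [negW_insertNth, if_neg hmax, if_pos hmin, add_zero, sum_add_distrib,
      sum_ite_irrel, sum_const_zero, hw.sum_pow_descW_insertNth_max,
      hw.sum_pow_descW_insertNth_min]
  rw [descPoly, sum_filter, sum_signedWords_succ, sum_congr rfl hword,
    sum_add_distrib, ← sum_filter, ← sum_filter]
  simp only [descPoly, sum_add_distrib, mul_sum, derivative_sum, add_assoc]

theorem descPoly_even_sub_descPoly_odd (n : ℕ) :
    descPoly n Even - descPoly n (fun k => ¬Even k) = (1 - X) ^ n := by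
  induction n with
  | zero => simp [descPoly_zero]
  | succ m ih =>
    rw [descPoly_succ, descPoly_succ, descPoly_congr (fun k => Nat.even_add_one (n := k)),
      descPoly_congr (p := fun k => ¬Even (k + 1)) (q := Even)
        (fun k => by rw [Nat.even_add_one, not_not]), pow_succ]
    linear_combination (1 - X) * ih

open Polynomial in
theorem stmt16 (n : ℕ) (hn : 1 ≤ n) :
    polyDtP n = (C (2 * (n : ℝ)) * X - X + 1) * polyDtP (n - 1)
      + 2 * X * (1 - X) * derivative (polyDtP (n - 1))
      + X * (1 - X) ^ (n - 1) := by
  obtain ⟨m, rfl⟩ : ∃ m, n = m + 1 := ⟨n - 1, by omega⟩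
  have hsub := descPoly_even_sub_descPoly_odd m
  have hsub' := congrArg derivative hsub
  rw [derivative_sub] at hsub'
  rw [Nat.add_sub_cancel, polyDtP_eq_descPoly, polyDtP_eq_descPoly, descPoly_succ,
    descPoly_congr (q := Even) (fun _ => Nat.even_add_one.not.trans not_not)]
  simp only [map_mul, map_add, map_one, map_ofNat, map_natCast, Nat.cast_add, Nat.cast_one]
  linear_combination ((m : ℝ[X]) + 1) * X * hsub + X * (1 - X) * hsub'
    + X * one_sub_X_mul_derivative_one_sub_X_pow (R := ℝ) m
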